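/- Let A ∈ ℂ^{n×p} and b ∈ ℝⁿ with b_i ≠ 0 for all i, and suppose there exists x ∈ ℂ^p with |Ax| = b. Let M = diag(b)(I − AA†)diag(b). Then M ⪰ 0 and the minimum of Tr(UM) over {U ∈ H_n : U ⪰ 0, diag(U) = 1} equals 0; it is attained at U = uu*, where u ∈ ℂⁿ is defined by u_i = (Ax)_i / b_i (which satisfies |u_i| = 1 for all i). -/

import Mathlib

/-!
`I - AA†` is the orthogonal projector onto `(range A)ᗮ`, so `M` is congruent to a positive
semidefinite matrix, and `Tr(UM) ≥ 0` for every `U ⪰ 0`. Since `diag(b) u = Ax ∈ range A`, the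
vector `u` lies in the kernel of `M`, so `Tr(uu*M) = u*Mu = 0`.
-/

open Matrix ComplexOrder

namespace Matrix

variable {n : Type*} [Fintype n]

theorem trace_vecMulVec_mul {R : Type*} [CommSemiring R] (a b : n → R) (M : Matrix n n R) :
    trace (vecMulVec a b * M) = b ⬝ᵥ (M *ᵥ a) := by
  simp only [trace, diag, mul_apply, vecMulVec_apply, dotProduct, mulVec, Finset.mul_sum]
  rw [Finset.sum_comm]
  refine Finset.sum_congr rfl fun i _ => Finset.sum_congr rfl fun j _ => ?_
  ring

theorem isStarProjection_mul_of_mul_mul_eq_self {m R : Type*} [Fintype m] [NonUnitalSemiring R]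
    [Star R] {A : Matrix n m R} {B : Matrix m n R} (hABA : A * B * A = A)
    (hAB : (A * B)ᴴ = A * B) : IsStarProjection (A * B) where
  isIdempotentElem := by rw [IsIdempotentElem, ← Matrix.mul_assoc, hABA]
  isSelfAdjoint := hAB

variable {𝕜 : Type*} [RCLike 𝕜]

open scoped MatrixOrder in
theorem _root_.IsStarProjection.posSemidef {P : Matrix n n 𝕜} (hP : IsStarProjection P) :
    P.PosSemidef :=
  hP.nonneg.posSemidef

theorem PosSemidef.diagonal_ofReal_mul_mul_diagonal_ofReal [DecidableEq n] {Q : Matrix n n 𝕜}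
    (hQ : Q.PosSemidef) (b : n → ℝ) :
    (diagonal (fun i => (b i : 𝕜)) * Q * diagonal (fun i => (b i : 𝕜))).PosSemidef := by
  simpa [diagonal_conjTranspose, Pi.star_def, RCLike.star_def] using
    hQ.conjTranspose_mul_mul_same (diagonal (fun i => (b i : 𝕜)))

theorem PosSemidef.trace_mul_nonneg {U M : Matrix n n 𝕜} (hU : U.PosSemidef)
    (hM : M.PosSemidef) : 0 ≤ trace (U * M) := by
  obtain ⟨m, v, rfl⟩ := posSemidef_iff_eq_sum_vecMulVec.mp hU
  rw [Finset.sum_mul, trace_sum]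
  refine Finset.sum_nonneg fun i _ => ?_
  rw [trace_vecMulVec_mul]
  exact hM.dotProduct_mulVec_nonneg (v i)

end Matrix

/-- If all `bᵢ ≠ 0` and `|Ax| = b` for some `x`, then
`M = diag(b)(I − AA†)diag(b)` is positive semidefinite and the minimum of `Tr(UM)` over
`{U ⪰ 0 : diag(U) = 1}` equals `0`, attained at `U = uu*` with `uᵢ = (Ax)ᵢ/bᵢ`
(a unit-modulus vector). -/
theorem phaseCut_exact_recovery {n p : ℕ}
    (A : Matrix (Fin n) (Fin p) ℂ) (Ad : Matrix (Fin p) (Fin n) ℂ)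
    (hPenrose : A * Ad * A = A ∧ Ad * A * Ad = Ad ∧
      (A * Ad)ᴴ = A * Ad ∧ (Ad * A)ᴴ = Ad * A)
    (b : Fin n → ℝ) (hb : ∀ i, b i ≠ 0)
    (x : Fin p → ℂ) (hx : ∀ i, ‖A.mulVec x i‖ = b i)
    (u : Fin n → ℂ) (hu : u = fun i => A.mulVec x i / (b i : ℂ))
    (M : Matrix (Fin n) (Fin n) ℂ)
    (hM : M = (Matrix.diagonal fun i => (b i : ℂ)) * (1 - A * Ad) *
      (Matrix.diagonal fun i => (b i : ℂ))) :
    M.PosSemidef ∧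
    (∀ i, ‖u i‖ = 1) ∧
    (Matrix.vecMulVec u (star u)).PosSemidef ∧
    (∀ i, Matrix.vecMulVec u (star u) i i = 1) ∧
    Matrix.trace (Matrix.vecMulVec u (star u) * M) = 0 ∧
    (∀ U : Matrix (Fin n) (Fin n) ℂ, U.PosSemidef → (∀ i, U i i = 1) →
      0 ≤ (Matrix.trace (U * M)).re) := by
  obtain ⟨hAAdA, -, hAAdH, -⟩ := hPenrose
  have hunit : ∀ i, ‖u i‖ = 1 := fun i => by
    rw [hu, norm_div, hx i, Complex.norm_real, Real.norm_of_nonneg (hx i ▸ norm_nonneg _),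
      div_self (hb i)]
  have hQ : (1 - A * Ad).PosSemidef :=
    (isStarProjection_mul_of_mul_mul_eq_self hAAdA hAAdH).one_sub.posSemidef
  have hMpsd : M.PosSemidef := hM ▸ hQ.diagonal_ofReal_mul_mul_diagonal_ofReal b
  have hDu : (diagonal fun i => (b i : ℂ)) *ᵥ u = A *ᵥ x := by
    ext i
    simp [hu, mulVec_diagonal, mul_div_cancel₀ _ (Complex.ofReal_ne_zero.mpr (hb i))]
  have hMu : M *ᵥ u = 0 := by
    rw [hM, ← mulVec_mulVec, hDu, ← mulVec_mulVec, mulVec_mulVec _ (1 - _), Matrix.sub_mul,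
      Matrix.one_mul, hAAdA, sub_self, zero_mulVec, mulVec_zero]
  refine ⟨hMpsd, hunit, posSemidef_vecMulVec_self_star u, fun i => ?_, ?_,
    fun U hU _ => (Complex.nonneg_iff.mp (hU.trace_mul_nonneg hMpsd)).1⟩
  · rw [vecMulVec_apply, Pi.star_apply, RCLike.star_def, RCLike.mul_conj, hunit i]
    norm_num
  · rw [trace_vecMulVec_mul, hMu, dotProduct_zero]
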